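/- arXiv:funct-an/9701006 — 2 statements merged into one kernel-verified Lean document; each statement's English description precedes it below -/
import Mathlib

section
/- Let A be an associative unital algebra over a field K, let β ∈ K be nonzero with τ = β⁻¹, and let (e_k)_{k≥0} be a sequence in A satisfying the Temperley–Lieb relations: e_k e_{k+1} e_k = τ·e_k and e_{k+1} e_k e_{k+1} = τ·e_{k+1} for all k ≥ 0, and e_k e_l = e_l e_k whenever |k−l| ≥ 2. Then for all integers n, k with 0 < k ≤ n one has β^{k(k+1)/2} · (e_{n,0} e_{n+1,0} ⋯ e_{n+k,0}) = e_{n,0} e_{n+1,2} e_{n+2,4} ⋯ e_{n+k,2k}, where e_{n,m} denotes the ordered product of the e_i from index n to index m. -/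
/-- The ordered product `e_{n,m}`: ascending `e_n e_{n+1} ⋯ e_m` if `n ≤ m`,
descending `e_n e_{n-1} ⋯ e_m` if `n > m` (and just `e_n` when `n = m`). -/
def eInterval {A : Type*} [Monoid A] (e : ℕ → A) (n m : ℕ) : A :=
  if n ≤ m then ((List.range (m - n + 1)).map (fun i => e (n + i))).prod
  else ((List.range (n - m + 1)).map (fun i => e (n - i))).prod

namespace TLaux

variable {A : Type*} [Monoid A]

/-- Descending product `e n * e (n-1) * ... * e m` (for `m ≤ n`). -/
def D (e : ℕ → A) (n m : ℕ) : A :=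
  ((List.range (n + 1 - m)).map (fun i => e (n - i))).prod

lemma D_self (e : ℕ → A) (n : ℕ) : D e n n = e n := by
  simp [D, List.range_succ]

lemma D_peel_top (e : ℕ → A) {n m : ℕ} (h : m ≤ n) :
    D e (n + 1) m = e (n + 1) * D e n m := by
  have h1 : n + 1 + 1 - m = (n + 1 - m) + 1 := by omega
  rw [D, h1, List.range_succ_eq_map, List.map_cons, List.prod_cons, List.map_map]
  congr 1
  rw [D]
  refine congrArg List.prod (List.map_congr_left fun i _ => ?_)
  simp only [Function.comp_apply]
  congr 1
  omega

lemma D_peel_bot (e : ℕ → A) {n m : ℕ} (h : m < n) :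
    D e n m = D e n (m + 1) * e m := by
  have h1 : n + 1 - m = (n + 1 - (m + 1)) + 1 := by omega
  rw [D, h1, List.range_succ, List.map_append, List.prod_append]
  congr 1
  simp only [List.map_cons, List.map_nil, List.prod_cons, List.prod_nil, mul_one]
  congr 1
  omega

lemma D_split (e : ℕ → A) {m p n : ℕ} (h1 : m ≤ p) (h2 : p < n) :
    D e n m = D e n (p + 1) * D e p m := by
  obtain ⟨d, rfl⟩ := Nat.exists_eq_add_of_le h1
  clear h1
  induction d generalizing m with
  | zero => simpa [D_self] using D_peel_bot e (show m < n by omega)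
  | succ d ih =>
    have e1 : m + (d + 1) = (m + 1) + d := by omega
    rw [D_peel_bot e (show m < n by omega), e1, ih (by omega), mul_assoc,
      ← D_peel_bot e (show m < m + 1 + d by omega)]

lemma commute_e_D (e : ℕ → A)
    (hcomm : ∀ j l : ℕ, (j + 2 ≤ l ∨ l + 2 ≤ j) → e j * e l = e l * e j)
    {j n m : ℕ} (h : ∀ i, m ≤ i → i ≤ n → j + 2 ≤ i ∨ i + 2 ≤ j) :
    Commute (e j) (D e n m) := by
  apply Commute.list_prod_right
  intro x hx
  simp only [List.mem_map, List.mem_range] at hx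
  obtain ⟨i, hi, rfl⟩ := hx
  exact hcomm j (n - i) (h _ (by omega) (by omega))

lemma commute_D_D (e : ℕ → A)
    (hcomm : ∀ j l : ℕ, (j + 2 ≤ l ∨ l + 2 ≤ j) → e j * e l = e l * e j)
    {a b c d : ℕ} (h : a + 2 ≤ d) :
    Commute (D e a b) (D e c d) := by
  apply Commute.list_prod_right
  intro x hx
  simp only [List.mem_map, List.mem_range] at hx
  obtain ⟨i, hi, rfl⟩ := hx
  exact (commute_e_D e hcomm (fun i' h1 h2 => Or.inr (by omega))).symm

section TL

variable {K A : Type*} [Field K] [Ring A] [Algebra K A]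
variable (τ : K) (e : ℕ → A)

lemma lemA (hTL1 : ∀ j : ℕ, e j * e (j + 1) * e j = τ • e j)
    (hcomm : ∀ j l : ℕ, (j + 2 ≤ l ∨ l + 2 ≤ j) → e j * e l = e l * e j)
    {a b : ℕ} (hb : b + 1 ≤ a) :
    D e a b * D e (a + 1) b = τ • (D e a b * D e (a + 1) (b + 2)) := by
  have hcom : Commute (e b) (D e (a + 1) (b + 2)) :=
    commute_e_D e hcomm (fun i hi _ => Or.inl (by omega))
  have h1 : D e (a + 1) b = D e (a + 1) (b + 2) * e (b + 1) * e b := by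
    rw [D_peel_bot e (show b < a + 1 by omega), D_peel_bot e (show b + 1 < a + 1 by omega)]
  have h2 : D e a b = D e a (b + 1) * e b := D_peel_bot e (by omega)
  rw [h1, h2]
  simp only [mul_assoc]
  rw [← mul_assoc (e b) (D e (a + 1) (b + 2)), hcom.eq]
  simp only [mul_assoc]
  rw [← mul_assoc (e b) (e (b + 1)) (e b), hTL1 b]
  simp only [mul_smul_comm]

lemma lemB (hTL1 : ∀ j : ℕ, e j * e (j + 1) * e j = τ • e j)
    (hcomm : ∀ j l : ℕ, (j + 2 ≤ l ∨ l + 2 ≤ j) → e j * e l = e l * e j)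
    {a b c : ℕ} (hb : b + 1 ≤ a) (hc : a + 1 ≤ c) :
    D e a b * D e c b = τ • (D e a b * D e c (b + 2)) := by
  rcases eq_or_lt_of_le hc with rfl | hlt
  · exact lemA τ e hTL1 hcomm hb
  · have hs1 : D e c b = D e c (a + 2) * D e (a + 1) b :=
      D_split e (show b ≤ a + 1 by omega) hlt
    have hs2 : D e c (b + 2) = D e c (a + 2) * D e (a + 1) (b + 2) :=
      D_split e (show b + 2 ≤ a + 1 by omega) hlt
    have hcom : Commute (D e a b) (D e c (a + 2)) :=
      commute_D_D e hcomm (le_refl _)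
    rw [hs1, hs2, ← mul_assoc, ← mul_assoc, hcom.eq, mul_assoc, mul_assoc,
      lemA τ e hTL1 hcomm hb, mul_smul_comm]

/-- The sweep lemma: raising the bottoms of a chain of descending intervals. -/
lemma lemC (hTL1 : ∀ j : ℕ, e j * e (j + 1) * e j = τ • e j)
    (hcomm : ∀ j l : ℕ, (j + 2 ≤ l ∨ l + 2 ≤ j) → e j * e l = e l * e j) :
    ∀ (t a m : ℕ), 2 * m + t ≤ a →
    D e a (2 * m) * ((List.range t).map (fun i => D e (a + 1 + i) (2 * (m + i)))).prod
      = τ ^ t •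
        (D e a (2 * m) *
          ((List.range t).map (fun i => D e (a + 1 + i) (2 * (m + i) + 2))).prod) := by
  intro t
  induction t with
  | zero => intro a m h; simp
  | succ t ih =>
    intro a m h
    rw [List.range_succ_eq_map, List.map_cons, List.prod_cons, List.map_cons, List.prod_cons,
      List.map_map, List.map_map]
    have hmap1 : (List.range t).map ((fun i => D e (a + 1 + i) (2 * (m + i))) ∘ Nat.succ)
        = (List.range t).map (fun i => D e (a + 1 + 1 + i) (2 * (m + 1 + i))) := by
      refine List.map_congr_left fun i _ => ?_
      simp only [Function.comp_apply]
      congr 1 <;> omega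
    have hmap2 : (List.range t).map ((fun i => D e (a + 1 + i) (2 * (m + i) + 2)) ∘ Nat.succ)
        = (List.range t).map (fun i => D e (a + 1 + 1 + i) (2 * (m + 1 + i) + 2)) := by
      refine List.map_congr_left fun i _ => ?_
      simp only [Function.comp_apply]
      congr 1 <;> omega
    rw [hmap1, hmap2]
    simp only [Nat.add_zero]
    rw [← mul_assoc, lemA τ e hTL1 hcomm (show 2 * m + 1 ≤ a by omega), smul_mul_assoc,
      mul_assoc]
    have hIH := ih (a + 1) (m + 1) (by omega)
    rw [show 2 * (m + 1) = 2 * m + 2 by omega] at hIH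
    rw [hIH, mul_smul_comm, smul_smul, ← pow_succ']

lemma main' (β : K) (hβτ : β * τ = 1)
    (hTL1 : ∀ j : ℕ, e j * e (j + 1) * e j = τ • e j)
    (hcomm : ∀ j l : ℕ, (j + 2 ≤ l ∨ l + 2 ≤ j) → e j * e l = e l * e j) :
    ∀ (k n : ℕ), k ≤ n →
    (β ^ (k * (k + 1) / 2)) • ((List.range (k + 1)).map (fun i => D e (n + i) 0)).prod
      = ((List.range (k + 1)).map (fun i => D e (n + i) (2 * i))).prod := by
  intro k
  induction k with
  | zero => intro n _; simp [List.range_succ]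
  | succ k ih =>
    intro n h
    have key : (k + 1) * (k + 2) / 2 = k * (k + 1) / 2 + (k + 1) := by
      obtain ⟨c0, hc0⟩ := Nat.even_mul_succ_self k
      have hp : (k + 1) * (k + 2) = k * (k + 1) + 2 * (k + 1) := by ring
      omega
    rw [show (k + 1) * (k + 1 + 1) / 2 = (k + 1) * (k + 2) / 2 from rfl, key, pow_add]
    rw [List.range_succ_eq_map, List.map_cons, List.prod_cons, List.map_cons, List.prod_cons,
      List.map_map, List.map_map]
    have hmapL : (List.range (k + 1)).map ((fun i => D e (n + i) 0) ∘ Nat.succ)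
        = (List.range (k + 1)).map (fun i => D e (n + 1 + i) 0) := by
      refine List.map_congr_left fun i _ => ?_
      simp only [Function.comp_apply]
      congr 1
      omega
    have hmapR : (List.range (k + 1)).map ((fun i => D e (n + i) (2 * i)) ∘ Nat.succ)
        = (List.range (k + 1)).map (fun i => D e (n + 1 + i) (2 * i + 2)) := by
      refine List.map_congr_left fun i _ => ?_
      simp only [Function.comp_apply]
      congr 1 <;> omega
    rw [hmapL, hmapR]
    simp only [Nat.add_zero, Nat.mul_zero]
    rw [mul_comm (β ^ (k * (k + 1) / 2)), mul_smul, ← mul_smul_comm, ih (n + 1) (by omega)]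
    have hC := lemC τ e hTL1 hcomm (k + 1) n 0 (by omega)
    simp only [Nat.zero_add, Nat.mul_zero] at hC
    rw [hC, smul_smul, ← mul_pow, hβτ, one_pow, one_smul]

end TL

lemma eInterval_eq_D {A : Type*} [Monoid A] (e : ℕ → A) {n m : ℕ} (h : m ≤ n) :
    eInterval e n m = D e n m := by
  rcases eq_or_lt_of_le h with rfl | h'
  · simp [eInterval, D_self, List.range_succ]
  · rw [eInterval, if_neg (by omega), D]
    have : n - m + 1 = n + 1 - m := by omega
    rw [this]

end TLaux

/-- Lemma 2.3(ii): for `0 < k ≤ n`,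
`β^{k(k+1)/2} · (e_{n,0} e_{n+1,0} ⋯ e_{n+k,0}) = e_{n,0} e_{n+1,2} e_{n+2,4} ⋯ e_{n+k,2k}`. -/
theorem lemma_2_3_ii {K A : Type*} [Field K] [Ring A] [Algebra K A]
    (β τ : K) (hβ : β ≠ 0) (hτ : τ = β⁻¹) (e : ℕ → A)
    (hTL1 : ∀ j : ℕ, e j * e (j + 1) * e j = τ • e j)
    (hTL2 : ∀ j : ℕ, e (j + 1) * e j * e (j + 1) = τ • e (j + 1))
    (hcomm : ∀ j l : ℕ, (j + 2 ≤ l ∨ l + 2 ≤ j) → e j * e l = e l * e j)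
    (n k : ℕ) (hk : 0 < k) (hkn : k ≤ n) :
    (β ^ (k * (k + 1) / 2)) •
        ((List.range (k + 1)).map (fun i => eInterval e (n + i) 0)).prod =
      ((List.range (k + 1)).map (fun i => eInterval e (n + i) (2 * i))).prod := by
  have hβτ : β * τ = 1 := by rw [hτ]; exact mul_inv_cancel₀ hβ
  have hL : (List.range (k + 1)).map (fun i => eInterval e (n + i) 0)
      = (List.range (k + 1)).map (fun i => TLaux.D e (n + i) 0) :=
    List.map_congr_left fun i _ => TLaux.eInterval_eq_D e (Nat.zero_le _)
  have hR : (List.range (k + 1)).map (fun i => eInterval e (n + i) (2 * i))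
      = (List.range (k + 1)).map (fun i => TLaux.D e (n + i) (2 * i)) := by
    refine List.map_congr_left fun i hi => ?_
    rw [List.mem_range] at hi
    exact TLaux.eInterval_eq_D e (by omega)
  rw [hL, hR]
  exact TLaux.main' τ e β hβτ hTL1 hcomm k n hkn
end

section
/- Let A be an associative unital algebra over a field K, let β ∈ K be nonzero with τ = β⁻¹, and let (e_k)_{k≥0} be a sequence in A satisfying the Temperley–Lieb relations: e_k e_{k+1} e_k = τ·e_k and e_{k+1} e_k e_{k+1} = τ·e_{k+1} for all k ≥ 0, and e_k e_l = e_l e_k whenever |k−l| ≥ 2. Then for every n ≥ 1 one has e_{n,0} e_{n+1,0} ⋯ e_{2n−2,0} · e_{2n−1,2n−2} = β^{n−1} · (e_{n,0} e_{n+1,0} ⋯ e_{2n−1,0}), where e_{n,m} denotes the ordered product of the e_i from index n to index m and the product e_{n,0} e_{n+1,0} ⋯ e_{2n−2,0} is interpreted as empty when n = 1. -/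
namespace TLaux

variable {A : Type*} [Monoid A]

/-- descending product `e (s+k) * e (s+k-1) * ⋯ * e s`. -/
def desc (e : ℕ → A) (s : ℕ) : ℕ → A
  | 0 => e s
  | k+1 => e (s+k+1) * desc e s k

/-- `stair e s d k = D_{s+d,s} · D_{s+d+1,s} ⋯ D_{s+d+k-1,s}` (k factors). -/
def stair (e : ℕ → A) (s d : ℕ) : ℕ → A
  | 0 => 1
  | k+1 => stair e s d k * desc e s (d+k)

lemma desc_peel (e : ℕ → A) (s k : ℕ) : desc e s (k+1) = desc e (s+1) k * e s := by
  induction k with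
  | zero => simp [desc]
  | succ k ih =>
    show e (s+(k+1)+1) * desc e s (k+1) = desc e (s+1) (k+1) * e s
    rw [ih]
    show e (s+(k+1)+1) * (desc e (s+1) k * e s) = (e ((s+1)+k+1) * desc e (s+1) k) * e s
    rw [← mul_assoc]
    congr 3
    omega

lemma desc_shift (e : ℕ → A) (t s k : ℕ) :
    desc (fun j => e (j + t)) s k = desc e (s + t) k := by
  induction k with
  | zero => simp [desc]
  | succ k ih =>
    show e (s+k+1+t) * desc (fun j => e (j+t)) s k = e ((s+t)+k+1) * desc e (s+t) k
    rw [ih]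
    congr 2
    omega

lemma stair_shift (e : ℕ → A) (t s d k : ℕ) :
    stair (fun j => e (j + t)) s d k = stair e (s + t) d k := by
  induction k with
  | zero => rfl
  | succ k ih =>
    show stair (fun j => e (j+t)) s d k * desc (fun j => e (j+t)) s (d+k)
        = stair e (s+t) d k * desc e (s+t) (d+k)
    rw [ih, desc_shift]

lemma e_comm_desc (e : ℕ → A)
    (hcomm : ∀ j l : ℕ, (j + 2 ≤ l ∨ l + 2 ≤ j) → e j * e l = e l * e j)
    {j s : ℕ} (h : j + 2 ≤ s) (k : ℕ) :
    e j * desc e s k = desc e s k * e j := by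
  induction k with
  | zero => exact hcomm j s (Or.inl h)
  | succ k ih =>
    show e j * (e (s+k+1) * desc e s k) = (e (s+k+1) * desc e s k) * e j
    rw [← mul_assoc, hcomm j (s+k+1) (Or.inl (by omega)), mul_assoc, ih, mul_assoc]

end TLaux

namespace TLaux

variable {K A : Type*} [Field K] [Ring A] [Algebra K A]

/-- The staircase recursion lemma. -/
lemma lemR (τ : K) (e : ℕ → A)
    (hTL1 : ∀ j : ℕ, e j * e (j + 1) * e j = τ • e j)
    (hcomm : ∀ j l : ℕ, (j + 2 ≤ l ∨ l + 2 ≤ j) → e j * e l = e l * e j)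
    (s d : ℕ) : ∀ k : ℕ,
      stair e s (d+1) (k+1) = τ^k • (desc e (s+1) d * (stair e (s+2) d k * e s)) := by
  intro k
  induction k with
  | zero =>
    show (1 : A) * desc e s (d+1) = τ^0 • (desc e (s+1) d * ((1:A) * e s))
    rw [one_mul, desc_peel, pow_zero, one_smul, one_mul]
  | succ k ih =>
    show stair e s (d+1) (k+1) * desc e s (d+1+(k+1)) = _
    rw [ih]
    have hd : d + 1 + (k + 1) = (d + k) + 1 + 1 := by omega
    rw [hd, desc_peel e s (d+k+1), desc_peel e (s+1) (d+k)]
    -- now: τ^k • (desc e (s+1) d * (stair e (s+2) d k * e s)) * ((desc e (s+2) (d+k) * e (s+1)) * e s)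
    rw [smul_mul_assoc]
    have key : e s * ((desc e (s+2) (d+k) * e (s+1)) * e s)
        = τ • (desc e (s+2) (d+k) * e s) := by
      have hc := e_comm_desc e hcomm (le_refl (s+2)) (d+k)
      rw [mul_assoc (desc e (s+2) (d+k)) (e (s+1)) (e s),
        ← mul_assoc (e s) (desc e (s+2) (d+k)) (e (s+1) * e s), hc,
        mul_assoc (desc e (s+2) (d+k)) (e s) (e (s+1) * e s),
        ← mul_assoc (e s) (e (s+1)) (e s), hTL1 s, mul_smul_comm]
    calc τ^k • (desc e (s+1) d * (stair e (s+2) d k * e s)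
            * ((desc e (s+2) (d+k) * e (s+1)) * e s))
        = τ^k • (desc e (s+1) d * (stair e (s+2) d k
            * (e s * ((desc e (s+2) (d+k) * e (s+1)) * e s)))) := by
          rw [mul_assoc, mul_assoc]
      _ = τ^k • (desc e (s+1) d * (stair e (s+2) d k
            * (τ • (desc e (s+2) (d+k) * e s)))) := by rw [key]
      _ = τ^(k+1) • (desc e (s+1) d * ((stair e (s+2) d k * desc e (s+2) (d+k)) * e s)) := by
          rw [mul_smul_comm, mul_smul_comm, smul_smul, ← mul_assoc, pow_succ,
            mul_comm (τ^k) τ]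
          simp only [mul_assoc]
      _ = τ^(k+1) • (desc e (s+1) d * (stair e (s+2) d (k+1) * e s)) := rfl

lemma mainAux (β τ : K) (hβ : β ≠ 0) (hτ : τ = β⁻¹) :
    ∀ n : ℕ, ∀ e : ℕ → A,
      (∀ j : ℕ, e j * e (j + 1) * e j = τ • e j) →
      (∀ j l : ℕ, (j + 2 ≤ l ∨ l + 2 ≤ j) → e j * e l = e l * e j) →
      stair e 0 (n+1) n * (e (2*n+1) * e (2*n)) = β^n • stair e 0 (n+1) (n+1) := by
  intro n
  induction n with
  | zero =>
    intro e h1 hc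
    show (1:A) * (e 1 * e 0) = (β^0 : K) • ((1:A) * desc e 0 1)
    simp [desc]
  | succ n ih =>
    intro e h1 hc
    have hτβ : τ * β = 1 := by rw [hτ]; exact inv_mul_cancel₀ hβ
    have hβτ : β * τ = 1 := by rw [hτ]; exact mul_inv_cancel₀ hβ
    have hR1 := lemR τ e h1 hc 0 (n+1) n
    have hR2 := lemR τ e h1 hc 0 (n+1) (n+1)
    have h1' : ∀ j : ℕ, (fun j => e (j+2)) j * (fun j => e (j+2)) (j+1) * (fun j => e (j+2)) j
        = τ • (fun j => e (j+2)) j := fun j => h1 (j+2)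
    have hc' : ∀ j l : ℕ, (j + 2 ≤ l ∨ l + 2 ≤ j) →
        (fun j => e (j+2)) j * (fun j => e (j+2)) l
          = (fun j => e (j+2)) l * (fun j => e (j+2)) j := by
      intro j l h
      exact hc (j+2) (l+2) (by omega)
    have hIH : stair e 2 (n+1) n * (e (2*n+3) * e (2*n+2))
        = β^n • stair e 2 (n+1) (n+1) := by
      have h := ih (fun j => e (j+2)) h1' hc'
      rw [stair_shift, stair_shift] at h
      exact h
    have g1 : 2*(n+1)+1 = 2*n+3 := by omega
    have g2 : 2*(n+1) = 2*n+2 := by omega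
    rw [g1, g2, hR1, hR2]
    simp only [Nat.reduceAdd, Nat.zero_add]
    have hcomm0a : e 0 * e (2*n+3) = e (2*n+3) * e 0 := hc 0 _ (Or.inl (by omega))
    have hcomm0b : e 0 * e (2*n+2) = e (2*n+2) * e 0 := hc 0 _ (Or.inl (by omega))
    calc (τ^n • (desc e 1 (n+1) * (stair e 2 (n+1) n * e 0))) * (e (2*n+3) * e (2*n+2))
        = τ^n • (desc e 1 (n+1) * (stair e 2 (n+1) n
            * (e 0 * (e (2*n+3) * e (2*n+2))))) := by
          rw [smul_mul_assoc, mul_assoc, mul_assoc]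
      _ = τ^n • (desc e 1 (n+1) * (stair e 2 (n+1) n
            * ((e (2*n+3) * e (2*n+2)) * e 0))) := by
          rw [← mul_assoc (e 0), hcomm0a, mul_assoc (e (2*n+3)), hcomm0b,
            ← mul_assoc (e (2*n+3))]
      _ = τ^n • ((desc e 1 (n+1) * (stair e 2 (n+1) n
            * (e (2*n+3) * e (2*n+2)))) * e 0) := by
          rw [← mul_assoc (stair e 2 (n+1) n), mul_assoc (desc e 1 (n+1))]
      _ = τ^n • ((desc e 1 (n+1) * (β^n • stair e 2 (n+1) (n+1))) * e 0) := by
          rw [hIH]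
      _ = (τ^n * β^n) • ((desc e 1 (n+1) * stair e 2 (n+1) (n+1)) * e 0) := by
          rw [mul_smul_comm, smul_mul_assoc, smul_smul]
      _ = (β^(n+1) * τ^(n+1)) • ((desc e 1 (n+1) * stair e 2 (n+1) (n+1)) * e 0) := by
          congr 1
          rw [← mul_pow, ← mul_pow, hτβ, hβτ, one_pow, one_pow]
      _ = β^(n+1) • (τ^(n+1) • (desc e 1 (n+1) * (stair e 2 (n+1) (n+1) * e 0))) := by
          rw [← smul_smul, mul_assoc]

lemma range_desc (e : ℕ → A) (a : ℕ) :
    ((List.range (a+1)).map (fun i => e (a - i))).prod = desc e 0 a := by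
  induction a with
  | zero =>
    show e (0-0) * ([] : List A).prod = desc e 0 0
    simp [desc]
  | succ a ih =>
    rw [List.range_succ_eq_map]
    simp only [List.map_cons, List.prod_cons, List.map_map]
    have hf : ((fun i => e (a + 1 - i)) ∘ Nat.succ) = fun i => e (a - i) := by
      funext i
      simp [Nat.succ_sub_succ]
    rw [hf, ih]
    show e (a+1-0) * desc e 0 a = desc e 0 (a+1)
    show e (a+1-0) * desc e 0 a = e (0+a+1) * desc e 0 a
    congr 2
    omega

lemma eInterval_eq_desc (e : ℕ → A) (a : ℕ) : eInterval e a 0 = desc e 0 a := by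
  cases a with
  | zero =>
    rw [eInterval, if_pos (le_refl 0)]
    show e (0+0) * ([] : List A).prod = desc e 0 0
    simp [desc]
  | succ a =>
    rw [eInterval, if_neg (by omega)]
    have : a + 1 - 0 + 1 = (a+1) + 1 := by omega
    rw [this, range_desc]

lemma stair_eq (e : ℕ → A) (d k : ℕ) :
    ((List.range k).map (fun i => eInterval e (d + i) 0)).prod = stair e 0 d k := by
  induction k with
  | zero => simp [stair]
  | succ k ih =>
    rw [List.range_succ, List.map_append, List.prod_append]
    simp only [List.map_cons, List.map_nil, List.prod_cons, List.prod_nil, mul_one]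
    rw [ih, eInterval_eq_desc]
    rfl

end TLaux

/-- Lemma 2.3(iii): for `n ≥ 1`,
`e_{n,0} e_{n+1,0} ⋯ e_{2n−2,0} · e_{2n−1,2n−2} = β^{n−1} · (e_{n,0} e_{n+1,0} ⋯ e_{2n−1,0})`,
where the product `e_{n,0} ⋯ e_{2n−2,0}` is empty when `n = 1`. -/
theorem lemma_2_3_iii {K A : Type*} [Field K] [Ring A] [Algebra K A]
    (β τ : K) (hβ : β ≠ 0) (hτ : τ = β⁻¹) (e : ℕ → A)
    (hTL1 : ∀ j : ℕ, e j * e (j + 1) * e j = τ • e j)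
    (hTL2 : ∀ j : ℕ, e (j + 1) * e j * e (j + 1) = τ • e (j + 1))
    (hcomm : ∀ j l : ℕ, (j + 2 ≤ l ∨ l + 2 ≤ j) → e j * e l = e l * e j)
    (n : ℕ) (hn : 1 ≤ n) :
    ((List.range (n - 1)).map (fun i => eInterval e (n + i) 0)).prod *
        eInterval e (2 * n - 1) (2 * n - 2) =
      (β ^ (n - 1)) •
        ((List.range n).map (fun i => eInterval e (n + i) 0)).prod := by
  obtain ⟨m, rfl⟩ : ∃ m, n = m + 1 := ⟨n - 1, by omega⟩
  have h1 : m + 1 - 1 = m := by omega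
  have h2a : 2 * (m + 1) - 1 = 2 * m + 1 := by omega
  have h2b : 2 * (m + 1) - 2 = 2 * m := by omega
  rw [h1, h2a, h2b]
  have hpair : eInterval e (2 * m + 1) (2 * m) = e (2 * m + 1) * e (2 * m) := by
    rw [eInterval, if_neg (by omega)]
    have h3 : 2 * m + 1 - (2 * m) + 1 = 2 := by omega
    rw [h3]
    show e (2*m+1-0) * (e (2*m+1-1) * 1) = _
    rw [mul_one]
    congr 2 <;> omega
  rw [hpair, TLaux.stair_eq, TLaux.stair_eq]
  exact TLaux.mainAux β τ hβ hτ m e hTL1 hcomm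
end
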